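/- arXiv:1909.10073 — 3 statements merged into one kernel-verified Lean document; each statement's English description precedes it below -/
import Mathlib

section
/- Let κ : ℝ^d × ℝ^d → ℂ be a measurable kernel and define κ̃(r,c) := κ(c - r/2, c + r/2) (i.e. κ(x,y) with r = y - x, c = (x+y)/2). Then for any s ≥ 2, the mixed norm ‖κ‖_{L^s_x L^2_y} := ‖ ‖κ(x,·)‖_{L^2} ‖_{L^s_x} satisfies ‖κ‖_{L^s_x L^2_y} ≤ ‖κ̃‖_{L^2_r L^s_c}, where ‖κ̃‖_{L^2_r L^s_c} := ( ∫ ‖κ̃(r,·)‖_{L^s}^2 dr )^{1/2}. -/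
open MeasureTheory
open scoped ENNReal NNReal

/-! Substituting `y = x + r` gives `‖κ(x,·)‖₂² = ∫ g(r,x) dr` with `g(r,x) = |κ(x,x+r)|²`, and
translating `c = x + r/2` shows `‖κ̃(r,·)‖_s² = ‖g(r,·)‖_{s/2}`. The claim is therefore
`‖∫ g(r,·) dr‖_{s/2} ≤ ∫ ‖g(r,·)‖_{s/2} dr`, Minkowski's integral inequality for the exponent
`s/2 ≥ 1`. For a finite exponent `p > 1` this follows from Hölder's inequality:
`∫ F^p = ∫∫ F^(p-1) g ≤ (∫ F^p)^(1/q) ∫ ‖g(r,·)‖_p dr` where `F = ∫ g(r,·) dr`. -/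

theorem ENNReal.le_rpow_of_le_rpow_mul {p q : ℝ} (hpq : p.HolderConjugate q) {a b : ℝ≥0∞}
    (ha : a ≠ ∞) (h : a ≤ a ^ (1 / q) * b) : a ≤ b ^ p := by
  rcases eq_or_ne a 0 with rfl | ha₀
  · exact zero_le
  have hsplit : a ^ (1 / p) * a ^ (1 / q) = a := by
    rw [← ENNReal.rpow_add _ _ ha₀ ha, one_div, one_div, hpq.inv_add_inv_eq_one, ENNReal.rpow_one]
  have hq₀ : a ^ (1 / q) ≠ 0 := by simp [ha₀, ha]
  have hq : a ^ (1 / q) ≠ ∞ := by simp [ha₀, ha]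
  have h' : a ^ (1 / q) * a ^ (1 / p) ≤ a ^ (1 / q) * b := by rwa [mul_comm, hsplit]
  calc a = (a ^ (1 / p)) ^ p := by rw [one_div, ENNReal.rpow_inv_rpow hpq.ne_zero]
    _ ≤ b ^ p := ENNReal.rpow_le_rpow ((ENNReal.mul_le_mul_iff_right hq₀ hq).mp h') hpq.nonneg

namespace MeasureTheory

section Minkowski

variable {α β : Type*} [MeasurableSpace α] [MeasurableSpace β] {μ : Measure α} {ν : Measure β}
  {g : β → α → ℝ≥0∞}

theorem lintegral_le_of_forall_simpleFunc_lintegral_lt_top [SigmaFinite μ] {F : α → ℝ≥0∞}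
    {C : ℝ≥0∞}
    (h : ∀ φ : SimpleFunc α ℝ≥0, (∀ x, (φ x : ℝ≥0∞) ≤ F x) → ∫⁻ x, φ x ∂μ < ∞ →
      ∫⁻ x, φ x ∂μ ≤ C) :
    ∫⁻ x, F x ∂μ ≤ C := by
  by_contra! hC
  simp only [lintegral_eq_nnreal, lt_iSup_iff] at hC
  obtain ⟨φ₀, hφ₀F, hCφ₀⟩ := hC
  rw [← SimpleFunc.lintegral_eq_lintegral, SimpleFunc.coe_map] at hCφ₀
  obtain ⟨φ, hφφ₀, hφ, hCφ⟩ := SimpleFunc.exists_lt_lintegral_simpleFunc_of_lt_lintegral hCφ₀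
  exact (h φ (fun x => (ENNReal.coe_le_coe.2 (hφφ₀ x)).trans (hφ₀F x)) hφ).not_gt hCφ

theorem lintegral_rpow_le_rpow_mul_lintegral_rpow [SFinite μ] [SFinite ν]
    (hg : Measurable (Function.uncurry g)) {p q : ℝ} (hpq : p.HolderConjugate q) {f : α → ℝ≥0∞}
    (hf : Measurable f) (hfg : ∀ x, f x ≤ ∫⁻ r, g r x ∂ν) :
    ∫⁻ x, f x ^ p ∂μ ≤ (∫⁻ x, f x ^ p ∂μ) ^ (1 / q) * ∫⁻ r, (∫⁻ x, g r x ^ p ∂μ) ^ (1 / p) ∂ν := by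
  have hpow : ∀ x, f x ^ p = f x ^ (p - 1) * f x := fun x => by
    conv_lhs => rw [← sub_add_cancel p 1]
    rw [ENNReal.rpow_add_of_nonneg _ _ (sub_nonneg.2 hpq.lt.le) zero_le_one, ENNReal.rpow_one]
  have hconj : ∀ x, (f x ^ (p - 1)) ^ q = f x ^ p := fun x => by
    rw [← ENNReal.rpow_mul, hpq.sub_one_mul_conj]
  calc ∫⁻ x, f x ^ p ∂μ = ∫⁻ x, f x ^ (p - 1) * f x ∂μ := lintegral_congr hpow
    _ ≤ ∫⁻ x, ∫⁻ r, f x ^ (p - 1) * g r x ∂ν ∂μ := by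
        gcongr with x
        have hgx : Measurable fun r => g r x := hg.comp measurable_prodMk_right
        rw [lintegral_const_mul _ hgx]
        gcongr
        exact hfg x
    _ = ∫⁻ r, ∫⁻ x, f x ^ (p - 1) * g r x ∂μ ∂ν := lintegral_lintegral_swap (by fun_prop)
    _ ≤ ∫⁻ r, (∫⁻ x, f x ^ p ∂μ) ^ (1 / q) * (∫⁻ x, g r x ^ p ∂μ) ^ (1 / p) ∂ν := by
        gcongr with r
        have hgr : Measurable (g r) := hg.comp measurable_prodMk_left
        simpa only [hconj, Pi.mul_apply] using ENNReal.lintegral_mul_le_Lp_mul_Lq μ hpq.symm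
          (hf.pow_const (p - 1)).aemeasurable hgr.aemeasurable
    _ = (∫⁻ x, f x ^ p ∂μ) ^ (1 / q) * ∫⁻ r, (∫⁻ x, g r x ^ p ∂μ) ^ (1 / p) ∂ν :=
        lintegral_const_mul _ ((hg.pow_const p).lintegral_prod_right'.pow_const _)

theorem lintegral_lintegral_rpow_le [SigmaFinite μ] [SFinite ν]
    (hg : Measurable (Function.uncurry g)) {p : ℝ} (hp : 1 ≤ p) :
    (∫⁻ x, (∫⁻ r, g r x ∂ν) ^ p ∂μ) ^ (1 / p) ≤ ∫⁻ r, (∫⁻ x, g r x ^ p ∂μ) ^ (1 / p) ∂ν := by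
  rcases hp.eq_or_lt with rfl | hp
  · simpa using (lintegral_lintegral_swap (by fun_prop)).le
  set B := ∫⁻ r, (∫⁻ x, g r x ^ p ∂μ) ^ (1 / p) ∂ν
  have hpq : p.HolderConjugate p.conjExponent := .conjExponent hp
  suffices ∫⁻ x, (∫⁻ r, g r x ∂ν) ^ p ∂μ ≤ B ^ p by
    calc _ ≤ (B ^ p) ^ (1 / p) := ENNReal.rpow_le_rpow this (by positivity)
      _ = B := by rw [one_div, ENNReal.rpow_rpow_inv hpq.ne_zero]
  -- Hölder's bound can only be divided through where the integral is finite, hence the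
  -- approximation by simple functions of finite integral.
  refine lintegral_le_of_forall_simpleFunc_lintegral_lt_top fun φ hφ hφ_fin => ?_
  have hφp : ∀ x, ((φ x : ℝ≥0∞) ^ (1 / p)) ^ p = φ x := fun x => by
    rw [one_div, ENNReal.rpow_inv_rpow hpq.ne_zero]
  have hφg : ∀ x, (φ x : ℝ≥0∞) ^ (1 / p) ≤ ∫⁻ r, g r x ∂ν := fun x => by
    calc _ ≤ ((∫⁻ r, g r x ∂ν) ^ p) ^ (1 / p) := ENNReal.rpow_le_rpow (hφ x) (by positivity)
      _ = _ := by rw [one_div, ENNReal.rpow_rpow_inv hpq.ne_zero]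
  have hHolder := lintegral_rpow_le_rpow_mul_lintegral_rpow (μ := μ) hg hpq
    (φ.measurable.coe_nnreal_ennreal.pow_const _) hφg
  simp only [hφp] at hHolder
  exact ENNReal.le_rpow_of_le_rpow_mul hpq hφ_fin.ne hHolder

theorem essSup_lintegral_le [SigmaFinite μ] [SFinite ν] (hg : Measurable (Function.uncurry g)) :
    essSup (fun x => ∫⁻ r, g r x ∂ν) μ ≤ ∫⁻ r, essSup (g r) μ ∂ν := by
  refine essSup_le_of_ae_le _ <|
    ae_le_of_forall_setLIntegral_le_of_sigmaFinite hg.lintegral_prod_left' fun A _ hA => ?_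
  calc ∫⁻ x in A, ∫⁻ r, g r x ∂ν ∂μ = ∫⁻ r, ∫⁻ x in A, g r x ∂μ ∂ν :=
        lintegral_lintegral_swap (hg.comp measurable_swap).aemeasurable
    _ ≤ ∫⁻ r, essSup (g r) μ * μ A ∂ν := by
        gcongr with r
        rw [← setLIntegral_const]
        exact lintegral_mono_ae (ae_restrict_of_ae (ENNReal.ae_le_essSup (g r)))
    _ = ∫⁻ x in A, ∫⁻ r, essSup (g r) μ ∂ν ∂μ := by
        rw [lintegral_mul_const' _ _ hA.ne, setLIntegral_const]

theorem eLpNorm_lintegral_le [SigmaFinite μ] [SFinite ν] (hg : Measurable (Function.uncurry g))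
    {p : ℝ≥0∞} (hp : 1 ≤ p) :
    eLpNorm (fun x => ∫⁻ r, g r x ∂ν) p μ ≤ ∫⁻ r, eLpNorm (g r) p μ ∂ν := by
  rcases eq_or_ne p ∞ with rfl | hp_top
  · simpa only [eLpNorm_exponent_top, eLpNormEssSup, enorm_eq_self] using essSup_lintegral_le hg
  have hp₀ : p ≠ 0 := (zero_lt_one.trans_le hp).ne'
  simp only [eLpNorm_eq_lintegral_rpow_enorm_toReal hp₀ hp_top, enorm_eq_self]
  exact lintegral_lintegral_rpow_le hg (by simpa using ENNReal.toReal_mono hp_top hp)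

end Minkowski

section Translation

variable {G ε : Type*} [AddCommGroup G] [MeasurableSpace G] [MeasurableAdd G]
  [TopologicalSpace ε] [ContinuousENorm ε] (μ : Measure G) [μ.IsAddRightInvariant]

theorem eLpNorm_comp_add_right (f : G → ε) (a : G) (p : ℝ≥0∞) :
    eLpNorm (fun x => f (x + a)) p μ = eLpNorm f p μ := by
  conv_rhs => rw [← map_add_right_eq_self μ a]
  exact ((measurableEmbedding_addRight a).eLpNorm_map_measure).symm

theorem eLpNorm_two_eq_lintegral_comp_add (f : G → ε) (x : G) :
    eLpNorm f 2 μ = (∫⁻ r, ‖f (x + r)‖ₑ ^ (2 : ℝ) ∂μ) ^ (1 / 2 : ℝ) := by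
  rw [← eLpNorm_comp_add_right μ f x,
    eLpNorm_eq_lintegral_rpow_enorm_toReal two_ne_zero ENNReal.ofNat_ne_top]
  simp only [add_comm _ x, ENNReal.toReal_ofNat]

theorem eLpNorm_comp_sub_half_add_half [Module ℝ G] (f : G → G → ε) (r : G) (p : ℝ≥0∞) :
    eLpNorm (fun c => f (c - (2:ℝ)⁻¹ • r) (c + (2:ℝ)⁻¹ • r)) p μ =
      eLpNorm (fun x => f x (x + r)) p μ := by
  have hshift : (fun c => f (c - (2:ℝ)⁻¹ • r) (c + (2:ℝ)⁻¹ • r)) =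
      fun c => (fun x => f x (x + r)) (c + -((2:ℝ)⁻¹ • r)) := by
    funext c
    congr 1 <;> module
  rw [hshift, eLpNorm_comp_add_right μ (fun x => f x (x + r))]

end Translation

end MeasureTheory

/-- Mixed-norm inequality `‖κ‖_{L^s_x L^2_y} ≤ ‖κ̃‖_{L^2_r L^s_c}` where
`κ̃(r,c) = κ(c - r/2, c + r/2)`. -/
theorem stmt_1 (d : ℕ) (κ : EuclideanSpace ℝ (Fin d) → EuclideanSpace ℝ (Fin d) → ℂ)
    (hκ : Measurable (Function.uncurry κ)) (s : ℝ≥0∞) (hs : 2 ≤ s) :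
    eLpNorm (fun x => (eLpNorm (fun y => κ x y) 2 volume).toReal) s volume ≤
      (∫⁻ r, (eLpNorm (fun c => κ (c - (2:ℝ)⁻¹ • r) (c + (2:ℝ)⁻¹ • r)) s volume) ^ 2) ^
        (1/2 : ℝ) := by
  set g : EuclideanSpace ℝ (Fin d) → EuclideanSpace ℝ (Fin d) → ℝ≥0∞ :=
    fun r x => ‖κ x (x + r)‖ₑ ^ (2 : ℝ)
  have hg : Measurable (Function.uncurry g) :=
    (hκ.comp (measurable_snd.prodMk (measurable_snd.add measurable_fst))).enorm.pow_const _
  have hs' : 1 ≤ s * ENNReal.ofReal (1 / 2) := by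
    rw [one_div, ENNReal.ofReal_inv_of_pos two_pos, ← div_eq_mul_inv,
      ENNReal.le_div_iff_mul_le (by simp) (by simp)]
    simpa using hs
  have hcol : ∀ r, eLpNorm (g r) (s * ENNReal.ofReal (1 / 2)) volume =
      eLpNorm (fun c => κ (c - (2:ℝ)⁻¹ • r) (c + (2:ℝ)⁻¹ • r)) s volume ^ 2 := fun r => by
    rw [eLpNorm_comp_sub_half_add_half, eLpNorm_enorm_rpow _ two_pos, mul_assoc,
      ← ENNReal.ofReal_mul (by norm_num), ENNReal.rpow_two]
    norm_num
  calc _ ≤ eLpNorm (fun x => eLpNorm (κ x) 2 volume) s volume :=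
        eLpNorm_mono_enorm fun x =>
          (Real.enorm_eq_ofReal ENNReal.toReal_nonneg).trans_le ENNReal.ofReal_toReal_le
    _ = eLpNorm (fun x => ∫⁻ r, g r x) (s * ENNReal.ofReal (1 / 2)) volume ^ (1 / 2 : ℝ) := by
        simp_rw [fun x => eLpNorm_two_eq_lintegral_comp_add volume (κ x) x,
          ← eLpNorm_enorm_rpow _ one_half_pos, enorm_eq_self]
        rfl
    _ ≤ (∫⁻ r, eLpNorm (g r) (s * ENNReal.ofReal (1 / 2)) volume) ^ (1 / 2 : ℝ) := by
        gcongr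
        exact eLpNorm_lintegral_le hg hs'
    _ = _ := by simp_rw [hcol]
end

section
/- Let f ∈ L^p(ℝ^d) and let κ be a Hilbert–Schmidt operator on L^2(ℝ^d) with kernel κ(x,y). Then the Hilbert–Schmidt norm of the operator f·κ (composition of multiplication by f with κ) satisfies ‖fκ‖_{I^2} ≤ ‖f‖_{L^p} ‖κ‖_{L^2_r L^s_c}, whenever 1/p + 1/s = 1/2. -/
/-!
In the coordinates `x = c - r/2`, `y = c + r/2`, which preserve Lebesgue measure on
`ℝᵈ × ℝᵈ`, the squared Hilbert–Schmidt norm becomes `∫ ‖f(· - r/2) κ̃(r, ·)‖₂² dr`. For each `r`,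
Hölder's inequality with `1/2 = 1/p + 1/s` and translation invariance of `‖f‖_p` bound the inner
norm by `‖f‖_p ‖κ̃(r, ·)‖_s`. Pulling `‖f‖_p`, which may be `∞`, out of the `r`-integral requires
`r ↦ ‖κ̃(r, ·)‖_s` to be measurable, also when `s = ∞`.
-/

open MeasureTheory Function
open scoped ENNReal

namespace MeasureTheory

section Sections

variable {α β E : Type*} [MeasurableSpace α] [MeasurableSpace β] {ν : Measure β} [SFinite ν]

theorem measurable_essSup_of_uncurry {F : α → β → ℝ≥0∞} (hF : Measurable (uncurry F)) :
    Measurable fun a => essSup (F a) ν := by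
  refine measurable_of_Iic fun t => ?_
  have hiff : ∀ a, essSup (F a) ν ≤ t ↔ ν (Prod.mk a ⁻¹' {q | t < uncurry F q}) = 0 := by
    intro a
    change _ ↔ ν {b | t < F a b} = 0
    simp_rw [← not_le, ← ae_iff]
    exact ⟨fun h => (ae_le_essSup).mono fun b hb => hb.trans h, essSup_le_of_ae_le t⟩
  simp_rw [Set.preimage, Set.mem_Iic, hiff]
  exact measurable_measure_prodMk_left (measurableSet_lt measurable_const hF)
    (measurableSet_singleton 0)

theorem measurable_eLpNorm_of_uncurry [NormedAddCommGroup E] [MeasurableSpace E]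
    [OpensMeasurableSpace E] {F : α → β → E} (hF : Measurable (uncurry F)) (p : ℝ≥0∞) :
    Measurable fun a => eLpNorm (F a) p ν := by
  rcases eq_or_ne p 0 with rfl | hp0
  · simp only [eLpNorm_exponent_zero]; exact measurable_const
  rcases eq_or_ne p ⊤ with rfl | hptop
  · simp only [eLpNorm_exponent_top, eLpNormEssSup]
    exact measurable_essSup_of_uncurry hF.enorm
  simp only [eLpNorm_eq_lintegral_rpow_enorm_toReal hp0 hptop]
  exact ((hF.enorm.pow_const _).lintegral_prod_right').pow_const _

end Sections

theorem eLpNorm_prod_eq_lintegral_eLpNorm_rpow {α β E : Type*} [MeasurableSpace α]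
    [MeasurableSpace β] [NormedAddCommGroup E] {μ : Measure α} {ν : Measure β} [SFinite ν]
    {p : ℝ≥0∞} (hp0 : p ≠ 0) (hptop : p ≠ ⊤) {H : α × β → E}
    (hH : AEStronglyMeasurable H (μ.prod ν)) :
    eLpNorm H p (μ.prod ν) =
      (∫⁻ a, eLpNorm (fun b => H (a, b)) p ν ^ p.toReal ∂μ) ^ (1 / p.toReal) := by
  have hp : p.toReal ≠ 0 := (ENNReal.toReal_pos hp0 hptop).ne'
  simp only [eLpNorm_eq_lintegral_rpow_enorm_toReal hp0 hptop, ← ENNReal.rpow_mul,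
    one_div_mul_cancel hp, ENNReal.rpow_one]
  rw [lintegral_prod _ (hH.enorm.pow_const _)]

section Translation

variable {E R : Type*} [AddCommGroup E] [MeasurableSpace E] [MeasurableAdd E] [NormedRing R]
  {μ : Measure E} [μ.IsAddRightInvariant]

theorem eLpNorm_translate_mul_le {p q r : ℝ≥0∞} [p.HolderTriple q r] {f g : E → R}
    (hf : AEStronglyMeasurable f μ) (hg : AEStronglyMeasurable g μ) (v : E) :
    eLpNorm (fun c => f (c - v) * g c) r μ ≤ eLpNorm f p μ * eLpNorm g q μ := by
  have hshift := measurePreserving_sub_right μ v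
  have hHolder := eLpNorm_le_eLpNorm_mul_eLpNorm_of_nnnorm (p := p) (q := q) (r := r)
    (hf.comp_measurePreserving hshift) hg (· * ·) 1
    (.of_forall fun c => by rw [one_mul]; exact nnnorm_mul_le _ _)
  rwa [ENNReal.coe_one, one_mul, eLpNorm_comp_measurePreserving hf hshift] at hHolder

end Translation

section Center

variable {E : Type*} [AddCommGroup E] [Module ℝ E] [MeasurableSpace E] [MeasurableAdd₂ E]
  [MeasurableNeg E] [MeasurableConstSMul ℝ E] (μ : Measure E) [SFinite μ] [μ.IsAddLeftInvariant]

theorem measurePreserving_sub_half_smul_add_half_smul :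
    MeasurePreserving (fun q : E × E => (q.2 - (2:ℝ)⁻¹ • q.1, q.2 + (2:ℝ)⁻¹ • q.1))
      (μ.prod μ) (μ.prod μ) := by
  have shear₁ : MeasurePreserving (fun q : E × E => (q.1, q.2 - (2:ℝ)⁻¹ • q.1))
      (μ.prod μ) (μ.prod μ) :=
    (MeasurePreserving.id μ).skew_product (g := fun r c => c - (2:ℝ)⁻¹ • r) (by fun_prop)
      (.of_forall fun r => (measurePreserving_sub_right μ _).map_eq)
  have shear₂ : MeasurePreserving (fun q : E × E => (q.1, q.1 + q.2)) (μ.prod μ) (μ.prod μ) :=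
    (MeasurePreserving.id μ).skew_product (g := fun x r => x + r) measurable_add
      (.of_forall fun x => (measurePreserving_add_left μ x).map_eq)
  convert shear₂.comp (Measure.measurePreserving_swap.comp shear₁) using 1
  ext q <;> simp only [comp_apply, Prod.fst_swap, Prod.snd_swap]
  module

end Center

end MeasureTheory

theorem stmt_3_general (d : ℕ) (f : EuclideanSpace ℝ (Fin d) → ℂ)
    (κ : EuclideanSpace ℝ (Fin d) → EuclideanSpace ℝ (Fin d) → ℂ)
    (hf : Measurable f) (hκ : Measurable (Function.uncurry κ))
    (p s : ℝ≥0∞) (hps : 1 / p + 1 / s = 1 / 2) :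
    eLpNorm (fun z : EuclideanSpace ℝ (Fin d) × EuclideanSpace ℝ (Fin d) =>
        f z.1 * κ z.1 z.2) 2 (volume.prod volume) ≤
      eLpNorm f p volume *
        (∫⁻ r, (eLpNorm (fun c => κ (c - (2:ℝ)⁻¹ • r) (c + (2:ℝ)⁻¹ • r)) s volume) ^ 2) ^
          (1/2 : ℝ) := by
  have : p.HolderTriple s 2 := ⟨by simpa only [one_div] using hps⟩
  have hcenter := measurePreserving_sub_half_smul_add_half_smul
    (volume : Measure (EuclideanSpace ℝ (Fin d)))
  have hκc : Measurable (uncurry fun r c : EuclideanSpace ℝ (Fin d) =>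
      κ (c - (2:ℝ)⁻¹ • r) (c + (2:ℝ)⁻¹ • r)) := hκ.comp hcenter.measurable
  have hfκ : Measurable fun z : EuclideanSpace ℝ (Fin d) × EuclideanSpace ℝ (Fin d) =>
      f z.1 * κ z.1 z.2 := (hf.comp measurable_fst).mul hκ
  rw [← eLpNorm_comp_measurePreserving hfκ.aestronglyMeasurable hcenter,
    eLpNorm_prod_eq_lintegral_eLpNorm_rpow two_ne_zero ENNReal.ofNat_ne_top
      (hfκ.comp hcenter.measurable).aestronglyMeasurable, ENNReal.toReal_ofNat]
  simp only [comp_apply]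
  calc _ ≤ (∫⁻ r, (eLpNorm f p volume *
          eLpNorm (fun c => κ (c - (2:ℝ)⁻¹ • r) (c + (2:ℝ)⁻¹ • r)) s volume) ^ (2:ℝ)) ^
            (1 / 2 : ℝ) := by
        gcongr with r
        exact eLpNorm_translate_mul_le hf.aestronglyMeasurable
          (hκc.comp measurable_prodMk_left).aestronglyMeasurable _
    _ = _ := by
        simp only [ENNReal.mul_rpow_of_nonneg _ _ zero_le_two, ENNReal.rpow_two]
        rw [lintegral_const_mul _ ((measurable_eLpNorm_of_uncurry hκc s).pow_const 2),
          ENNReal.mul_rpow_of_nonneg _ _ (by norm_num), ← ENNReal.rpow_two, ← ENNReal.rpow_mul]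
        norm_num

/-- `‖f κ‖_{I²} ≤ ‖f‖_{L^p} ‖κ‖_{L^2_r L^s_c}` when `1/p + 1/s = 1/2`, where
`(fκ)(x,y) = f(x) κ(x,y)` and the Hilbert-Schmidt norm is the `L²` norm of the kernel. -/
theorem stmt_3 (d : ℕ) (f : EuclideanSpace ℝ (Fin d) → ℂ)
    (κ : EuclideanSpace ℝ (Fin d) → EuclideanSpace ℝ (Fin d) → ℂ)
    (hf : Measurable f) (hκ : Measurable (Function.uncurry κ))
    (p s : ℝ≥0∞) (hp : 1 ≤ p) (hs : 1 ≤ s) (hps : 1 / p + 1 / s = 1 / 2) :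
    eLpNorm (fun z : EuclideanSpace ℝ (Fin d) × EuclideanSpace ℝ (Fin d) =>
        f z.1 * κ z.1 z.2) 2 (volume.prod volume) ≤
      eLpNorm f p volume *
        (∫⁻ r, (eLpNorm (fun c => κ (c - (2:ℝ)⁻¹ • r) (c + (2:ℝ)⁻¹ • r)) s volume) ^ 2) ^
          (1/2 : ℝ) :=
  stmt_3_general d f κ hf hκ p s hps
end

section
/- Let κ, γ = κ*κ be as follows: κ is Hilbert–Schmidt on L^2(ℝ^d) with kernel κ(z,x), ρ_γ(x) = ∫|κ(z,x)|² dz, and Jκ Hilbert–Schmidt with kernel (Jκ)(z,x); set ρ_{Jγ} := ρ_{(Jκ)*κ} + ρ_{κ*(Jκ)}. Then for β ≥ 1/2, ∫_{ℝ^d} ρ_γ(x)^{2β−1} ρ_{Jγ}(x)² dx ≤ 4 ‖κ‖_{L^2_r L^∞_c}^{4β} ‖Jκ‖_{I^2}², where ‖κ‖_{L^2_r L^∞_c} is the mixed norm of the kernel in relative/center coordinates and ‖Jκ‖_{I^2}² = ∫∫ |(Jκ)(z,x)|² dz dx. -/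
/-!
Cauchy–Schwarz in `z` gives `ρ_{Jγ}(x)² ≤ 4 ρ_γ(x) ∫ |Jκ(z,x)|² dz`, so the integrand is at most
`4 ρ_γ(x)^{2β} ∫ |Jκ(z,x)|² dz` once `2β - 1 ≥ 0`. Substituting `z = x - r` gives
`ρ_γ(x) = ∫ |κ̃(r, x - r/2)|² dr`, and `|κ̃(r, ·)| ≤ ‖κ̃(r, ·)‖_∞` off an `r`-dependent null set;
Fubini (which needs `r ↦ ‖κ̃(r, ·)‖_∞` to be measurable) turns this into
`ρ_γ(x) ≤ ‖κ‖²_{L²_r L^∞_c}` for almost every `x`.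
-/
open MeasureTheory
open scoped ENNReal

section EssSup

variable {α β : Type*} [MeasurableSpace α] [MeasurableSpace β]

lemma essSup_le_iff_measure_lt_eq_zero {μ : Measure β} {h : β → ℝ≥0∞} {c : ℝ≥0∞} :
    essSup h μ ≤ c ↔ μ {b | c < h b} = 0 := by
  refine ⟨fun hc => ?_, fun hc => essSup_le_of_ae_le c ?_⟩
  · refine measure_mono_null (fun b hb => ?_) (ae_iff.mp (ae_le_essSup (f := h)))
    exact not_le.mpr (hc.trans_lt hb)
  · filter_upwards [measure_eq_zero_iff_ae_notMem.mp hc] with b hb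
    exact not_lt.mp hb

lemma measurable_essSup_prodMk_left (ν : Measure β) [SFinite ν] {f : α × β → ℝ≥0∞}
    (hf : Measurable f) : Measurable fun a => essSup (fun b => f (a, b)) ν := by
  refine measurable_of_Iic fun c => ?_
  have hpre : (fun a => essSup (fun b => f (a, b)) ν) ⁻¹' Set.Iic c =
      (fun a => ν (Prod.mk a ⁻¹' {p | c < f p})) ⁻¹' {0} := by
    ext a
    exact essSup_le_iff_measure_lt_eq_zero
  rw [hpre]
  exact measurable_measure_prodMk_left (measurableSet_lt measurable_const hf)
    (measurableSet_singleton 0)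

end EssSup

lemma lintegral_mul_sq_le_lintegral_sq_mul {α : Type*} [MeasurableSpace α] {μ : Measure α}
    {f g : α → ℝ≥0∞} (hf : AEMeasurable f μ) (hg : AEMeasurable g μ) :
    (∫⁻ a, f a * g a ∂μ) ^ 2 ≤ (∫⁻ a, f a ^ 2 ∂μ) * ∫⁻ a, g a ^ 2 ∂μ := by
  have hHolder := ENNReal.lintegral_mul_le_Lp_mul_Lq μ Real.HolderConjugate.two_two hf hg
  simp only [Pi.mul_apply, ENNReal.rpow_two] at hHolder
  calc (∫⁻ a, f a * g a ∂μ) ^ 2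
      ≤ ((∫⁻ a, f a ^ 2 ∂μ) ^ (1 / 2 : ℝ) * (∫⁻ a, g a ^ 2 ∂μ) ^ (1 / 2 : ℝ)) ^ 2 := by
        gcongr
    _ = (∫⁻ a, f a ^ 2 ∂μ) * ∫⁻ a, g a ^ 2 ∂μ := by
        rw [mul_pow, ← ENNReal.rpow_natCast, ← ENNReal.rpow_natCast, ← ENNReal.rpow_mul,
          ← ENNReal.rpow_mul]
        norm_num

open ComplexConjugate in
lemma enorm_integral_conj_mul_add_sq_le {α 𝕜 : Type*} [MeasurableSpace α] [RCLike 𝕜]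
    {μ : Measure α} {f g : α → 𝕜} (hf : AEMeasurable f μ) (hg : AEMeasurable g μ) :
    ‖∫ a, (conj (g a) * f a + conj (f a) * g a) ∂μ‖ₑ ^ 2 ≤
      4 * (∫⁻ a, ‖f a‖ₑ ^ 2 ∂μ) * ∫⁻ a, ‖g a‖ₑ ^ 2 ∂μ := by
  have hpt : ∀ a, ‖conj (g a) * f a + conj (f a) * g a‖ₑ ≤ 2 * (‖f a‖ₑ * ‖g a‖ₑ) := fun a =>
    (enorm_add_le _ _).trans_eq <| by simp only [enorm_mul, RCLike.enorm_conj]; ring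
  calc ‖∫ a, (conj (g a) * f a + conj (f a) * g a) ∂μ‖ₑ ^ 2
      ≤ (2 * ∫⁻ a, ‖f a‖ₑ * ‖g a‖ₑ ∂μ) ^ 2 := by
        have hfg : AEMeasurable (fun a => ‖f a‖ₑ * ‖g a‖ₑ) μ := hf.enorm.mul hg.enorm
        rw [← lintegral_const_mul'' 2 hfg]
        gcongr
        exact (enorm_integral_le_lintegral_enorm _).trans (lintegral_mono hpt)
    _ ≤ 4 * ((∫⁻ a, ‖f a‖ₑ ^ 2 ∂μ) * ∫⁻ a, ‖g a‖ₑ ^ 2 ∂μ) := by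
        rw [mul_pow]
        gcongr
        · norm_num
        · exact lintegral_mul_sq_le_lintegral_sq_mul hf.enorm hg.enorm
    _ = _ := (mul_assoc _ _ _).symm

section MixedNorm

variable {E F : Type*} [NormedAddCommGroup E] [NormedSpace ℝ E] [FiniteDimensional ℝ E]
  [MeasurableSpace E] [BorelSpace E] {μ : Measure E} [μ.IsAddHaarMeasure]
  [NormedAddCommGroup F] [MeasurableSpace F] [BorelSpace F]

lemma ae_lintegral_enorm_sq_le_mixedNorm {κ : E → E → F} (hκ : Measurable (Function.uncurry κ)) :
    ∀ᵐ x ∂μ, ∫⁻ z, ‖κ z x‖ₑ ^ 2 ∂μ ≤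
      ∫⁻ r, eLpNorm (fun c => κ (c - (2:ℝ)⁻¹ • r) (c + (2:ℝ)⁻¹ • r)) ∞ μ ^ 2 ∂μ := by
  set G : E → ℝ≥0∞ := fun r => eLpNorm (fun c => κ (c - (2:ℝ)⁻¹ • r) (c + (2:ℝ)⁻¹ • r)) ∞ μ
  have hκ' : Measurable fun p : E × E => ‖κ (p.2 - (2:ℝ)⁻¹ • p.1) (p.2 + (2:ℝ)⁻¹ • p.1)‖ₑ :=
    (hκ.comp (f := fun p : E × E => (p.2 - (2:ℝ)⁻¹ • p.1, p.2 + (2:ℝ)⁻¹ • p.1))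
      (by fun_prop)).enorm
  have hG : Measurable G := by
    simp only [G, eLpNorm_exponent_top, eLpNormEssSup]
    exact measurable_essSup_prodMk_left
      (f := fun p : E × E => ‖κ (p.2 - (2:ℝ)⁻¹ • p.1) (p.2 + (2:ℝ)⁻¹ • p.1)‖ₑ) μ hκ'
  have hslices : ∀ᵐ x ∂μ, ∀ᵐ r ∂μ, ‖κ (x - r) x‖ₑ ≤ G r := by
    have hset : MeasurableSet {q : E × E | ‖κ (q.1 - q.2) q.1‖ₑ ≤ G q.2} :=
      measurableSet_le (hκ.comp (f := fun q : E × E => (q.1 - q.2, q.1)) (by fun_prop)).enorm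
        (hG.comp measurable_snd)
    rw [Measure.ae_ae_comm (p := fun x r => ‖κ (x - r) x‖ₑ ≤ G r) hset]
    refine Filter.Eventually.of_forall fun r => ?_
    have hc : ∀ᵐ c ∂μ, ‖κ (c - (2:ℝ)⁻¹ • r) (c + (2:ℝ)⁻¹ • r)‖ₑ ≤ G r := ae_le_essSup
    filter_upwards [(measurePreserving_sub_right μ ((2:ℝ)⁻¹ • r)).quasiMeasurePreserving.ae hc]
      with x hx
    convert hx using 3 <;> module
  filter_upwards [hslices] with x hx
  calc ∫⁻ z, ‖κ z x‖ₑ ^ 2 ∂μ = ∫⁻ r, ‖κ (x - r) x‖ₑ ^ 2 ∂μ :=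
        ((Measure.measurePreserving_sub_left μ x).lintegral_comp
          ((hκ.comp (f := fun z => (z, x)) (by fun_prop)).enorm.pow_const 2)).symm
    _ ≤ ∫⁻ r, G r ^ 2 ∂μ := lintegral_mono_ae (hx.mono fun r hr => pow_le_pow_left' hr 2)

end MixedNorm

theorem stmt_17_general (d : ℕ) (β : ℝ) (hβ : 1 / 2 ≤ β)
    (κ Jκ : EuclideanSpace ℝ (Fin d) → EuclideanSpace ℝ (Fin d) → ℂ)
    (hκ : Measurable (Function.uncurry κ)) (hJκ : Measurable (Function.uncurry Jκ)) :
    (∫⁻ x, (∫⁻ z, (‖κ z x‖₊ : ℝ≥0∞) ^ 2) ^ (2 * β - 1) *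
        (‖∫ z, ((starRingEnd ℂ) (Jκ z x) * κ z x +
          (starRingEnd ℂ) (κ z x) * Jκ z x)‖₊ : ℝ≥0∞) ^ 2) ≤
      4 * ((∫⁻ r, (eLpNorm (fun c => κ (c - (2:ℝ)⁻¹ • r) (c + (2:ℝ)⁻¹ • r)) ∞ volume) ^ 2) ^
          (1/2 : ℝ)) ^ (4 * β) *
        ∫⁻ x, ∫⁻ z, (‖Jκ z x‖₊ : ℝ≥0∞) ^ 2 := by
  set N := ∫⁻ r, (eLpNorm (fun c => κ (c - (2:ℝ)⁻¹ • r) (c + (2:ℝ)⁻¹ • r)) ∞ volume) ^ 2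
  have hpointwise : ∀ᵐ x, (∫⁻ z, ‖κ z x‖ₑ ^ 2) ^ (2 * β - 1) *
      ‖∫ z, ((starRingEnd ℂ) (Jκ z x) * κ z x + (starRingEnd ℂ) (κ z x) * Jκ z x)‖ₑ ^ 2 ≤
      4 * N ^ (2 * β) * ∫⁻ z, ‖Jκ z x‖ₑ ^ 2 := by
    filter_upwards [ae_lintegral_enorm_sq_le_mixedNorm hκ] with x hρ
    set ρ := ∫⁻ z, ‖κ z x‖ₑ ^ 2
    calc ρ ^ (2 * β - 1) * ‖∫ z, ((starRingEnd ℂ) (Jκ z x) * κ z x +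
          (starRingEnd ℂ) (κ z x) * Jκ z x)‖ₑ ^ 2
        ≤ ρ ^ (2 * β - 1) * (4 * ρ * ∫⁻ z, ‖Jκ z x‖ₑ ^ 2) := by
          gcongr
          exact enorm_integral_conj_mul_add_sq_le hκ.of_uncurry_right.aemeasurable
            hJκ.of_uncurry_right.aemeasurable
      _ = 4 * (ρ ^ (2 * β - 1) * ρ ^ (1 : ℝ)) * ∫⁻ z, ‖Jκ z x‖ₑ ^ 2 := by
          rw [ENNReal.rpow_one]; ring
      _ = 4 * ρ ^ (2 * β) * ∫⁻ z, ‖Jκ z x‖ₑ ^ 2 := by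
          rw [← ENNReal.rpow_add_of_nonneg _ _ (by linarith) zero_le_one, sub_add_cancel]
      _ ≤ 4 * N ^ (2 * β) * ∫⁻ z, ‖Jκ z x‖ₑ ^ 2 := by
          gcongr
  calc _ ≤ ∫⁻ x, 4 * N ^ (2 * β) * ∫⁻ z, ‖Jκ z x‖ₑ ^ 2 := lintegral_mono_ae hpointwise
    _ = 4 * N ^ (2 * β) * ∫⁻ x, ∫⁻ z, ‖Jκ z x‖ₑ ^ 2 :=
        lintegral_const_mul _ (hJκ.enorm.pow_const 2).lintegral_prod_left
    _ = _ := by rw [← ENNReal.rpow_mul, show (1 / 2 : ℝ) * (4 * β) = 2 * β by ring]; rfl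

/-- Key estimate for the exchange term: for `β ≥ 1/2`,
`∫ ρ_γ^{2β-1} ρ_{Jγ}² dx ≤ 4 ‖κ‖_{L²_r L^∞_c}^{4β} ‖Jκ‖_{I²}²`, where `γ = κ*κ`,
`ρ_γ(x) = ∫ |κ(z,x)|² dz` and `ρ_{Jγ} = ρ_{(Jκ)*κ} + ρ_{κ*(Jκ)}`. -/
theorem stmt_17 (d : ℕ) (β : ℝ) (hβ : 1 / 2 ≤ β)
    (κ Jκ : EuclideanSpace ℝ (Fin d) → EuclideanSpace ℝ (Fin d) → ℂ)
    (hκ : Measurable (Function.uncurry κ)) (hJκ : Measurable (Function.uncurry Jκ))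
    (hL2 : ∀ x, MemLp (fun z => κ z x) 2 volume ∧ MemLp (fun z => Jκ z x) 2 volume) :
    (∫⁻ x, (∫⁻ z, (‖κ z x‖₊ : ℝ≥0∞) ^ 2) ^ (2 * β - 1) *
        (‖∫ z, ((starRingEnd ℂ) (Jκ z x) * κ z x +
          (starRingEnd ℂ) (κ z x) * Jκ z x)‖₊ : ℝ≥0∞) ^ 2) ≤
      4 * ((∫⁻ r, (eLpNorm (fun c => κ (c - (2:ℝ)⁻¹ • r) (c + (2:ℝ)⁻¹ • r)) ∞ volume) ^ 2) ^
          (1/2 : ℝ)) ^ (4 * β) *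
        ∫⁻ x, ∫⁻ z, (‖Jκ z x‖₊ : ℝ≥0∞) ^ 2 :=
  stmt_17_general d β hβ κ Jκ hκ hJκ
end
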